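/- Let K ⊆ ℝ² be a compact set, k ∈ ℕ, reals α_min ≤ α_max, L₁ ∈ ℝ, L₂, L₃ > 0, and for each 1 ≤ i ≤ k let S_i be a fixed function from the frontier of K into the space of continuous i-multilinear maps (ℝ²)^i → ℝ. Let (α_j)_{j∈ℕ} be a sequence of ContDiff ℝ k functions ℝ² → ℝ satisfying, for every j: α_min ≤ α_j ≤ α_max on K; α_j = α_min on the frontier of K; ∫_K α_j dx = L₁; ‖iteratedFDeriv ℝ i α_j(x)‖ ≤ L₂ for all i ≤ k, x ∈ K; ‖iteratedFDeriv ℝ k α_j(x) − iteratedFDeriv ℝ k α_j(y)‖ ≤ L₃‖x − y‖ for x, y ∈ K; and additionally iteratedFDeriv ℝ i α_j(x) = S_i(x) for every 1 ≤ i ≤ k and every x in the frontier of K. Then there exist a subsequence (α_{j_l}) and continuous functions g_i on K (for 0 ≤ i ≤ k, into the respective multilinear map spaces) with iteratedFDeriv ℝ i α_{j_l} → g_i uniformly on K, such that all the above constraints pass to the limit: α_min ≤ g_0 ≤ α_max on K, g_0 = α_min and g_i = S_i (1 ≤ i ≤ k) on the frontier of K, ∫_K g_0 = L₁, ‖g_i‖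 ≤ L₂ on K, and g_k is L₃-Lipschitz on K. -/

import Mathlib

/-!
Stack the derivatives of orders `0, …, k` of each `α j` into one map into the finite-dimensional
space `Π i ≤ k, (ℝ²)^[i] →L ℝ`. These maps are uniformly bounded on `K` and equicontinuous there,
after which Arzelà–Ascoli yields a uniformly convergent subsequence, and each constraint survives
the uniform limit. Since `K` need not be convex, the bounds on `K` alone give equicontinuity only at
interior points, via the mean value inequality on a ball. At a frontier point `x₀` one uses that
all `α j` have the same derivatives on `frontier K`: from a nearby `y ∈ K`, a closest point `y'` of
`closure Kᶜ` lies on `frontier K`, at distance at most `dist y x₀`, with the segment `[y, y']`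
inside `K`.
-/

open MeasureTheory Filter Set Topology Metric

instance ContinuousMultilinearMap.instFiniteDimensional {𝕜 ι : Type*} [NontriviallyNormedField 𝕜]
    [Fintype ι] {E : ι → Type*} [∀ i, NormedAddCommGroup (E i)] [∀ i, NormedSpace 𝕜 (E i)]
    [∀ i, FiniteDimensional 𝕜 (E i)] {F : Type*} [NormedAddCommGroup F] [NormedSpace 𝕜 F]
    [FiniteDimensional 𝕜 F] : FiniteDimensional 𝕜 (ContinuousMultilinearMap 𝕜 E F) :=
  .of_injective ContinuousMultilinearMap.toMultilinearMapLinear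
    ContinuousMultilinearMap.toMultilinearMap_injective

theorem IsCompact.exists_subseq_tendstoUniformlyOn {X E : Type*} [TopologicalSpace X]
    [MetricSpace E] {K : Set X} (hK : IsCompact K) {s : Set E} (hs : IsCompact s)
    {F : ℕ → X → E} (hcont : ∀ n, ContinuousOn (F n) K) (hFs : ∀ n, ∀ x ∈ K, F n x ∈ s)
    (hF : EquicontinuousOn F K) :
    ∃ φ : ℕ → ℕ, StrictMono φ ∧ ∃ g : X → E,
      ContinuousOn g K ∧ TendstoUniformlyOn (fun n => F (φ n)) g atTop K := by
  have : CompactSpace K := isCompact_iff_compactSpace.mp hK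
  let B (n : ℕ) : BoundedContinuousFunction K E :=
    .mkOfCompact ⟨K.domRestrict (F n), (hcont n).domRestrict⟩
  have hB : Equicontinuous fun n => ⇑(B n) := (equicontinuous_restrict_iff F).mpr hF
  have hA : IsCompact (closure (range B)) := by
    refine BoundedContinuousFunction.arzela_ascoli s hs _ ?_ ?_
    · rintro _ x ⟨n, rfl⟩
      exact hFs n x x.2
    · convert hB.comp (rangeSplitting B) with a
      exact congrArg _ (apply_rangeSplitting B a).symm
  obtain ⟨G, -, φ, hφ, hG⟩ := hA.tendsto_subseq fun n => subset_closure (mem_range_self n)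
  have hgG : K.domRestrict (Function.extend Subtype.val G (F 0)) = G :=
    funext fun x => Subtype.val_injective.extend_apply _ _ x
  refine ⟨φ, hφ, Function.extend Subtype.val G (F 0), ?_, ?_⟩
  · rw [continuousOn_iff_continuous_domRestrict, hgG]
    exact G.continuous
  · rw [tendstoUniformlyOn_iff_restrict, hgG]
    exact BoundedContinuousFunction.tendsto_iff_tendstoUniformly.mp hG

theorem IsClosed.exists_mem_frontier_segment_subset {V : Type*} [NormedAddCommGroup V]
    [NormedSpace ℝ V] [ProperSpace V] {K : Set V} (hK : IsClosed K) {x y : V}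
    (hx : x ∈ frontier K) (hy : y ∈ K) :
    ∃ y' ∈ frontier K, dist y y' ≤ dist y x ∧ segment ℝ y y' ⊆ K := by
  rw [frontier_eq_closure_inter_closure] at hx ⊢
  obtain ⟨y', hy'Kc, hy'⟩ := isClosed_closure.exists_infDist_eq_dist ⟨x, hx.2⟩ y
  have hball : closedBall y (dist y y') ⊆ K := by
    rcases eq_or_ne y y' with rfl | hne
    · simpa using hy
    rw [← closure_ball y (dist_ne_zero.mpr hne), ← hy']
    exact closure_minimal
      (ball_infDist_subset_compl.trans (compl_subset_comm.mpr subset_closure)) hK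
  have hseg : segment ℝ y y' ⊆ closedBall y (dist y y') :=
    (convex_closedBall y _).segment_subset (mem_closedBall_self dist_nonneg)
      (mem_closedBall.mpr (dist_comm y y' ▸ le_rfl))
  exact ⟨y', ⟨subset_closure (hball (hseg (right_mem_segment ℝ y y'))), hy'Kc⟩,
    hy' ▸ infDist_le_dist_of_mem hx.2, hseg.trans hball⟩

theorem equicontinuousOn_of_eqOn_frontier {ι V E : Type*} [NormedAddCommGroup V]
    [NormedSpace ℝ V] [ProperSpace V] [PseudoMetricSpace E] {K : Set V} (hK : IsClosed K)
    {F : ι → V → E} {F₀ : V → E} {C : NNReal} (hF₀ : ContinuousOn F₀ K)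
    (hfr : ∀ j, EqOn (F j) F₀ (frontier K))
    (hlip : ∀ j, ∀ s ⊆ K, Convex ℝ s → LipschitzOnWith C (F j) s) :
    EquicontinuousOn F K := by
  intro x₀ hx₀
  rw [uniformity_basis_dist.equicontinuousWithinAt_iff_right]
  intro ε hε
  have hCdist : Tendsto (fun y => C * dist y x₀) (𝓝[K] x₀) (𝓝 0) := by
    have := ((continuous_id.dist (continuous_const (y := x₀))).const_mul (C : ℝ)).tendsto x₀
    simpa using this.mono_left nhdsWithin_le_nhds
  by_cases hx₀int : x₀ ∈ interior K
  · obtain ⟨r, hr, hrK⟩ := Metric.mem_nhds_iff.mp (mem_interior_iff_mem_nhds.mp hx₀int)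
    filter_upwards [mem_nhdsWithin_of_mem_nhds (ball_mem_nhds x₀ hr),
      hCdist (Iio_mem_nhds hε)] with y hy hyε j
    calc dist (F j x₀) (F j y) ≤ C * dist x₀ y :=
          (hlip j _ hrK (convex_ball x₀ r)).dist_le_mul x₀ (mem_ball_self hr) y hy
      _ < ε := by rwa [dist_comm]
  · have hfx : x₀ ∈ frontier K := hK.frontier_eq ▸ ⟨hx₀, hx₀int⟩
    obtain ⟨δ, hδ, hF₀δ⟩ := Metric.continuousWithinAt_iff.mp (hF₀ x₀ hx₀) (ε / 2) (half_pos hε)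
    filter_upwards [self_mem_nhdsWithin,
      mem_nhdsWithin_of_mem_nhds (ball_mem_nhds x₀ (half_pos hδ)),
      hCdist (Iio_mem_nhds (half_pos hε))] with y hyK hyδ hyε j
    rw [mem_ball] at hyδ
    obtain ⟨y', hy'fr, hyy', hseg⟩ := hK.exists_mem_frontier_segment_subset hfx hyK
    have hy'K : y' ∈ K := hK.frontier_subset hy'fr
    have hfar : dist (F j x₀) (F j y') < ε / 2 := by
      rw [hfr j hfx, hfr j hy'fr, dist_comm]
      refine hF₀δ hy'K ?_
      calc dist y' x₀ ≤ dist y' y + dist y x₀ := dist_triangle _ _ _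
        _ < δ := by rw [dist_comm] at hyy'; linarith
    have hnear : dist (F j y') (F j y) ≤ C * dist y x₀ :=
      calc dist (F j y') (F j y) ≤ C * dist y' y :=
            (hlip j _ hseg (convex_segment y y')).dist_le_mul y' (right_mem_segment ℝ y y')
              y (left_mem_segment ℝ y y')
        _ ≤ C * dist y x₀ := by rw [dist_comm]; gcongr
    calc dist (F j x₀) (F j y) ≤ dist (F j x₀) (F j y') + dist (F j y') (F j y) :=
          dist_triangle _ _ _
      _ < ε := by linarith [show C * dist y x₀ < ε / 2 from hyε]

theorem Convex.norm_iteratedFDeriv_sub_le {V F : Type*} [NormedAddCommGroup V]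
    [NormedSpace ℝ V] [NormedAddCommGroup F] [NormedSpace ℝ F] {f : V → F} {n : WithTop ℕ∞}
    {i : ℕ} (hf : ContDiff ℝ n f) (hi : i < n) {s : Set V} (hs : Convex ℝ s) {C : ℝ}
    (hC : ∀ z ∈ s, ‖iteratedFDeriv ℝ (i + 1) f z‖ ≤ C) {x y : V} (hx : x ∈ s) (hy : y ∈ s) :
    ‖iteratedFDeriv ℝ i f y - iteratedFDeriv ℝ i f x‖ ≤ C * ‖y - x‖ :=
  hs.norm_image_sub_le_of_norm_fderiv_le
    (fun _ _ => (hf.differentiable_iteratedFDeriv hi).differentiableAt)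
    (fun z hz => by rw [norm_fderiv_iteratedFDeriv]; exact hC z hz) hx hy

theorem TendstoUniformlyOn.tendsto_setIntegral {X E : Type*} [TopologicalSpace X] [T2Space X]
    [MeasurableSpace X] [OpensMeasurableSpace X] {μ : Measure X} [IsFiniteMeasureOnCompacts μ]
    [NormedAddCommGroup E] [NormedSpace ℝ E] {K : Set X} (hK : IsCompact K)
    {F : ℕ → X → E} {f : X → E} (hF : ∀ n, ContinuousOn (F n) K)
    (h : TendstoUniformlyOn F f atTop K) :
    Tendsto (fun n => ∫ x in K, F n x ∂μ) atTop (𝓝 (∫ x in K, f x ∂μ)) := by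
  have hf : ContinuousOn f K := h.continuousOn (Frequently.of_forall hF)
  rw [Metric.tendsto_nhds]
  intro ε hε
  set m := μ.real K
  have hε' : 0 < ε / (m + 1) := by positivity
  filter_upwards [Metric.tendstoUniformlyOn_iff.mp h _ hε'] with n hn
  rw [dist_eq_norm, ← integral_sub ((hF n).integrableOn_compact hK) (hf.integrableOn_compact hK)]
  calc ‖∫ x in K, F n x - f x ∂μ‖ ≤ ε / (m + 1) * m :=
        norm_setIntegral_le_of_norm_le_const hK.measure_lt_top fun x hx => by
          rw [← dist_eq_norm, dist_comm]; exact (hn x hx).le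
    _ < ε := by
      rw [div_mul_eq_mul_div, div_lt_iff₀ (by positivity)]
      nlinarith

theorem exists_subseq_tendstoUniformlyOn_iteratedFDeriv {V F : Type*} [NormedAddCommGroup V]
    [NormedSpace ℝ V] [FiniteDimensional ℝ V] [NormedAddCommGroup F] [NormedSpace ℝ F]
    [FiniteDimensional ℝ F] {K : Set V} (hK : IsCompact K) {k : ℕ} {L₂ L₃ : ℝ}
    {f : ℕ → V → F} (hf : ∀ j, ContDiff ℝ (k : ℕ∞) (f j))
    (hbd : ∀ j, ∀ i ≤ k, ∀ x ∈ K, ‖iteratedFDeriv ℝ i (f j) x‖ ≤ L₂)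
    (hLip : ∀ j, ∀ x ∈ K, ∀ y ∈ K,
      ‖iteratedFDeriv ℝ k (f j) x - iteratedFDeriv ℝ k (f j) y‖ ≤ L₃ * ‖x - y‖)
    (hfr : ∀ j, ∀ i ≤ k,
      EqOn (iteratedFDeriv ℝ i (f j)) (iteratedFDeriv ℝ i (f 0)) (frontier K)) :
    ∃ φ : ℕ → ℕ, StrictMono φ ∧
    ∃ g : (i : ℕ) → V → ContinuousMultilinearMap ℝ (fun _ : Fin i => V) F,
      ∀ i ≤ k, ContinuousOn (g i) K ∧
        TendstoUniformlyOn (fun l => iteratedFDeriv ℝ i (f (φ l))) (g i) atTop K := by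
  let Φ (j : ℕ) (x : V) (i : Fin (k + 1)) := iteratedFDeriv ℝ i (f j) x
  have hcont (j : ℕ) : Continuous (Φ j) :=
    continuous_pi fun i => (hf j).continuous_iteratedFDeriv (by exact_mod_cast i.is_le)
  have hΦK (j : ℕ) : ∀ x ∈ K, Φ j x ∈ closedBall 0 L₂ := fun x hx =>
    mem_closedBall_zero_iff.mpr <| (pi_norm_le_iff_of_nonempty _).mpr fun i =>
      hbd j i i.is_le x hx
  have hlip (j : ℕ) (s : Set V) (hsK : s ⊆ K) (hs : Convex ℝ s) :
      LipschitzOnWith (max L₂ L₃).toNNReal (Φ j) s := by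
    refine LipschitzOnWith.of_dist_le' fun x hx y hy => dist_pi_le_iff'.mpr fun i => ?_
    rw [dist_eq_norm, dist_eq_norm]
    rcases i.is_le.lt_or_eq with hik | hik
    · calc _ ≤ L₂ * ‖x - y‖ := hs.norm_iteratedFDeriv_sub_le (hf j) (by exact_mod_cast hik)
            (fun z hz => hbd j (i + 1) hik z (hsK hz)) hy hx
        _ ≤ max L₂ L₃ * ‖x - y‖ := by gcongr; exact le_max_left _ _
    · have hk := hLip j x (hsK hx) y (hsK hy)
      rw [← hik] at hk
      calc _ ≤ L₃ * ‖x - y‖ := hk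
        _ ≤ max L₂ L₃ * ‖x - y‖ := by gcongr; exact le_max_right _ _
  have hequi : EquicontinuousOn Φ K :=
    equicontinuousOn_of_eqOn_frontier hK.isClosed (hcont 0).continuousOn
      (fun j x hx => funext fun i => hfr j i i.is_le hx) hlip
  obtain ⟨φ, hφ, G, hGcont, hG⟩ := hK.exists_subseq_tendstoUniformlyOn (isCompact_closedBall 0 L₂)
    (fun j => (hcont j).continuousOn) hΦK hequi
  refine ⟨φ, hφ, fun i x => if hi : i ≤ k then G x ⟨i, Nat.lt_succ_of_le hi⟩ else 0,
    fun i hi => ?_⟩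
  simp only [dif_pos hi]
  let i' : Fin (k + 1) := ⟨i, Nat.lt_succ_of_le hi⟩
  exact ⟨(continuous_apply i').comp_continuousOn hGcont,
    (Pi.uniformContinuous_proj _ i').comp_tendstoUniformlyOn hG⟩

theorem stmt10 (K : Set (EuclideanSpace ℝ (Fin 2))) (hK : IsCompact K)
    (k : ℕ) (αmin αmax L₁ L₂ L₃ : ℝ)
    (S : (i : ℕ) → EuclideanSpace ℝ (Fin 2) →
        ContinuousMultilinearMap ℝ (fun _ : Fin i => EuclideanSpace ℝ (Fin 2)) ℝ)
    (α : ℕ → EuclideanSpace ℝ (Fin 2) → ℝ)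
    (hsmooth : ∀ j, ContDiff ℝ (k : ℕ∞) (α j))
    (hbound : ∀ j, ∀ x ∈ K, αmin ≤ α j x ∧ α j x ≤ αmax)
    (hfront : ∀ j, ∀ x ∈ frontier K, α j x = αmin)
    (hvol : ∀ j, (∫ x in K, α j x) = L₁)
    (hCk : ∀ j, ∀ i ≤ k, ∀ x ∈ K, ‖iteratedFDeriv ℝ i (α j) x‖ ≤ L₂)
    (hLip : ∀ j, ∀ x ∈ K, ∀ y ∈ K,
      ‖iteratedFDeriv ℝ k (α j) x - iteratedFDeriv ℝ k (α j) y‖ ≤ L₃ * ‖x - y‖)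
    (hS : ∀ j, ∀ i, 1 ≤ i → i ≤ k → ∀ x ∈ frontier K, iteratedFDeriv ℝ i (α j) x = S i x) :
    ∃ φ : ℕ → ℕ, StrictMono φ ∧
    ∃ g : (i : ℕ) → EuclideanSpace ℝ (Fin 2) →
        ContinuousMultilinearMap ℝ (fun _ : Fin i => EuclideanSpace ℝ (Fin 2)) ℝ,
      (∀ i ≤ k, ContinuousOn (g i) K) ∧
      (∀ i ≤ k, TendstoUniformlyOn (fun l => iteratedFDeriv ℝ i (α (φ l))) (g i) atTop K) ∧
      (∀ x ∈ K, αmin ≤ g 0 x 0 ∧ g 0 x 0 ≤ αmax) ∧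
      (∀ x ∈ frontier K, g 0 x 0 = αmin) ∧
      (∀ i, 1 ≤ i → i ≤ k → ∀ x ∈ frontier K, g i x = S i x) ∧
      (∫ x in K, g 0 x 0) = L₁ ∧
      (∀ i ≤ k, ∀ x ∈ K, ‖g i x‖ ≤ L₂) ∧
      (∀ x ∈ K, ∀ y ∈ K, ‖g k x - g k y‖ ≤ L₃ * ‖x - y‖) := by
  have hfr (j i : ℕ) (hi : i ≤ k) :
      EqOn (iteratedFDeriv ℝ i (α j)) (iteratedFDeriv ℝ i (α 0)) (frontier K) := by
    intro x hx
    rcases Nat.eq_zero_or_pos i with rfl | hpos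
    · ext m
      simp [hfront j x hx, hfront 0 x hx]
    · rw [hS j i hpos hi x hx, hS 0 i hpos hi x hx]
  obtain ⟨φ, hφ, g, hg⟩ :=
    exists_subseq_tendstoUniformlyOn_iteratedFDeriv hK hsmooth hCk hLip hfr
  have hlim (i : ℕ) (hi : i ≤ k) (x) (hx : x ∈ K) :
      Tendsto (fun l => iteratedFDeriv ℝ i (α (φ l)) x) atTop (𝓝 (g i x)) :=
    (hg i hi).2.tendsto_at hx
  have hunif₀ : TendstoUniformlyOn (fun l => α (φ l)) (fun x => g 0 x 0) atTop K :=
    (continuousMultilinearCurryFin0 ℝ _ ℝ).isometry.uniformContinuous.comp_tendstoUniformlyOn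
      (hg 0 k.zero_le).2
  have hlim₀ (x) (hx : x ∈ K) : Tendsto (fun l => α (φ l) x) atTop (𝓝 (g 0 x 0)) :=
    hunif₀.tendsto_at hx
  refine ⟨φ, hφ, g, fun i hi => (hg i hi).1, fun i hi => (hg i hi).2,
    fun x hx => ⟨?_, ?_⟩, fun x hx => ?_, fun i h1i hi x hx => ?_, ?_,
    fun i hi x hx => ?_, fun x hx y hy => ?_⟩
  · exact ge_of_tendsto' (hlim₀ x hx) fun l => (hbound (φ l) x hx).1
  · exact le_of_tendsto' (hlim₀ x hx) fun l => (hbound (φ l) x hx).2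
  · exact tendsto_nhds_unique (hlim₀ x (hK.isClosed.frontier_subset hx))
      (tendsto_const_nhds.congr fun l => (hfront (φ l) x hx).symm)
  · exact tendsto_nhds_unique (hlim i hi x (hK.isClosed.frontier_subset hx))
      (tendsto_const_nhds.congr fun l => (hS (φ l) i h1i hi x hx).symm)
  · exact tendsto_nhds_unique
      (hunif₀.tendsto_setIntegral hK fun l => (hsmooth (φ l)).continuous.continuousOn)
      (tendsto_const_nhds.congr fun l => (hvol (φ l)).symm)
  · exact le_of_tendsto' (hlim i hi x hx).norm fun l => hCk (φ l) i hi x hx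
  · exact le_of_tendsto' ((hlim k le_rfl x hx).sub (hlim k le_rfl y hy)).norm
      fun l => hLip (φ l) x hx y hy
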